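/- arXiv:1307.5246 — 2 statements merged into one kernel-verified Lean document; each statement's English description precedes it below -/
import Mathlib

section
/- For every q ∈ (0,1), every graph G with at least one edge has a nontrivial q-external partition: a partition V = A ∪ B with A, B nonempty such that every x ∈ A has d_B(x) ≥ q·d_G(x) and every y ∈ B has d_A(y) ≥ (1−q)·d_G(y). -/
open Finset

open scoped Classical in
noncomputable def degIn {V : Type*} (G : SimpleGraph V) [DecidableRel G.Adj] (S : Finset V) (x : V) : ℕ :=
  (S.filter fun y => G.Adj x y).card

section Aux
variable {V : Type*} [Fintype V] [DecidableEq V] (G : SimpleGraph V) [DecidableRel G.Adj]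

set_option linter.unusedSectionVars false

lemma degIn_def (S : Finset V) (x : V) : degIn G S x = (S.filter fun y => G.Adj x y).card := by
  classical
  rw [degIn]

lemma degIn_add_compl (A : Finset V) (x : V) :
    degIn G A x + degIn G Aᶜ x = G.degree x := by
  classical
  rw [degIn_def, degIn_def, ← Finset.card_union_of_disjoint, ← Finset.filter_union,
    Finset.union_compl]
  · rw [← SimpleGraph.neighborFinset_eq_filter, SimpleGraph.degree]
  · exact Finset.disjoint_filter_filter disjoint_compl_right

lemma degIn_erase_self (A : Finset V) (x : V) :
    degIn G (A.erase x) x = degIn G A x := by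
  classical
  rw [degIn_def, degIn_def, Finset.filter_erase, Finset.erase_eq_of_notMem]
  simp

lemma sum_ite_eq_degIn (S : Finset V) (x : V) :
    ∑ z ∈ S, (if G.Adj z x then (1:ℝ) else 0) = (degIn G S x : ℝ) := by
  classical
  rw [degIn_def, Finset.card_filter]
  push_cast
  refine Finset.sum_congr rfl fun z _ => ?_
  simp [G.adj_comm]

lemma degIn_insert (B : Finset V) (x : V) (hx : x ∉ B) (z : V) :
    (degIn G (insert x B) z : ℝ) = degIn G B z + if G.Adj z x then 1 else 0 := by
  classical
  rw [degIn_def, degIn_def, Finset.filter_insert]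
  by_cases h : G.Adj z x
  · rw [if_pos h, if_pos h, Finset.card_insert_of_notMem (by simp [hx])]
    push_cast; ring
  · rw [if_neg h, if_neg h, add_zero]

lemma degIn_erase (B : Finset V) (y : V) (hy : y ∈ B) (z : V) :
    (degIn G (B.erase y) z : ℝ) = degIn G B z - if G.Adj z y then 1 else 0 := by
  classical
  rw [degIn_def, degIn_def, Finset.filter_erase]
  by_cases h : G.Adj z y
  · rw [if_pos h, Finset.card_erase_of_mem (by simp [hy, h])]
    have : 0 < (B.filter fun w => G.Adj z w).card := Finset.card_pos.2 ⟨y, by simp [hy, h]⟩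
    push_cast [Nat.cast_sub (by omega : 1 ≤ (B.filter fun w => G.Adj z w).card)]
    ring
  · rw [if_neg h, Finset.erase_eq_of_notMem (by simp [h]), sub_zero]

noncomputable def cW (A : Finset V) : ℝ := ∑ x ∈ A, (degIn G Aᶜ x : ℝ)
noncomputable def sW (A : Finset V) : ℝ := ∑ x ∈ A, (G.degree x : ℝ)
noncomputable def fW (q : ℝ) (A : Finset V) : ℝ := cW G A + (1 - 2*q) * sW G A

lemma cW_erase (A : Finset V) (x : V) (hx : x ∈ A) :
    cW G (A.erase x) = cW G A - (degIn G Aᶜ x : ℝ) + (degIn G A x : ℝ) := by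
  classical
  have hcompl : (A.erase x)ᶜ = insert x Aᶜ := by
    rw [Finset.compl_erase]
  have hxnot : x ∉ Aᶜ := by simp [hx]
  rw [cW, hcompl]
  have h1 : ∀ z ∈ A.erase x, (degIn G (insert x Aᶜ) z : ℝ)
      = degIn G Aᶜ z + if G.Adj z x then 1 else 0 := fun z _ => degIn_insert G Aᶜ x hxnot z
  rw [Finset.sum_congr rfl h1, Finset.sum_add_distrib, sum_ite_eq_degIn,
    Finset.sum_erase_eq_sub (f := fun z => (degIn G Aᶜ z : ℝ)) hx, degIn_erase_self]
  rw [cW]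

lemma cW_insert (A : Finset V) (y : V) (hy : y ∈ Aᶜ) :
    cW G (insert y A) = cW G A + (degIn G Aᶜ y : ℝ) - (degIn G A y : ℝ) := by
  classical
  have hyA : y ∉ A := by simpa using hy
  have hcompl : (insert y A)ᶜ = Aᶜ.erase y := by
    rw [Finset.compl_insert]
  rw [cW, hcompl, Finset.sum_insert hyA, degIn_erase_self]
  have h1 : ∀ z ∈ A, (degIn G (Aᶜ.erase y) z : ℝ)
      = degIn G Aᶜ z - if G.Adj z y then 1 else 0 := fun z _ => degIn_erase G Aᶜ y hy z
  rw [Finset.sum_congr rfl h1, Finset.sum_sub_distrib, sum_ite_eq_degIn]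
  rw [cW]; ring

lemma sW_erase (A : Finset V) (x : V) (hx : x ∈ A) :
    sW G (A.erase x) = sW G A - (G.degree x : ℝ) :=
  Finset.sum_erase_eq_sub hx

lemma sW_insert (A : Finset V) (y : V) (hy : y ∉ A) :
    sW G (insert y A) = sW G A + (G.degree y : ℝ) := by
  rw [sW, Finset.sum_insert hy, sW]; ring

end Aux

/-- For every q ∈ (0,1), every graph with an edge has a nontrivial q-external partition. -/
theorem q_external_partition_exists {V : Type*} [Fintype V] [DecidableEq V]
    (G : SimpleGraph V) [DecidableRel G.Adj] (q : ℝ) (hq0 : 0 < q) (hq1 : q < 1)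
    (hE : ∃ x y, G.Adj x y) :
    ∃ A : Finset V, A.Nonempty ∧ Aᶜ.Nonempty ∧
      (∀ x ∈ A, q * (G.degree x : ℝ) ≤ (degIn G Aᶜ x : ℝ)) ∧
      (∀ y ∈ Aᶜ, (1 - q) * (G.degree y : ℝ) ≤ (degIn G A y : ℝ)) := by
  classical
  obtain ⟨u, v, huv⟩ := hE
  obtain ⟨A, -, hA⟩ := Finset.exists_max_image (Finset.univ : Finset (Finset V)) (fW G q)
    ⟨∅, Finset.mem_univ _⟩
  have hmax : ∀ S, fW G q S ≤ fW G q A := fun S => hA S (Finset.mem_univ S)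
  have hdu : 0 < (G.degree u : ℝ) := by
    have : 0 < G.degree u := G.degree_pos_iff_exists_adj u |>.2 ⟨v, huv⟩
    exact_mod_cast this
  -- condition on A side
  have cond1 : ∀ x ∈ A, q * (G.degree x : ℝ) ≤ (degIn G Aᶜ x : ℝ) := by
    intro x hx
    have h := hmax (A.erase x)
    rw [fW, fW, cW_erase G A x hx, sW_erase G A x hx] at h
    have hsum : (degIn G A x : ℝ) + (degIn G Aᶜ x : ℝ) = (G.degree x : ℝ) := by
      exact_mod_cast degIn_add_compl G A x
    nlinarith
  have cond2 : ∀ y ∈ Aᶜ, (1 - q) * (G.degree y : ℝ) ≤ (degIn G A y : ℝ) := by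
    intro y hy
    have hyA : y ∉ A := by simpa using hy
    have h := hmax (insert y A)
    rw [fW, fW, cW_insert G A y hy, sW_insert G A y hyA] at h
    have hsum : (degIn G A y : ℝ) + (degIn G Aᶜ y : ℝ) = (G.degree y : ℝ) := by
      exact_mod_cast degIn_add_compl G A y
    nlinarith
  refine ⟨A, ?_, ?_, cond1, cond2⟩
  · rw [Finset.nonempty_iff_ne_empty]
    intro hAe
    have hu : u ∈ Aᶜ := by simp [hAe]
    have := cond2 u hu
    rw [hAe] at this
    simp only [degIn_def, Finset.filter_empty, Finset.card_empty, Nat.cast_zero] at this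
    nlinarith
  · rw [Finset.nonempty_iff_ne_empty]
    intro hAe
    have hAu : A = Finset.univ := by
      rwa [Finset.compl_eq_empty_iff] at hAe
    have := cond1 u (hAu ▸ Finset.mem_univ u)
    rw [hAe] at this
    simp only [degIn_def, Finset.filter_empty, Finset.card_empty, Nat.cast_zero] at this
    nlinarith
end

section
/- Every n-vertex d-regular graph with d odd has a ⌈d/2⌉-cohesive set of at most n/2 + 1 vertices. -/
/-!
Among all sets of `⌈n/2⌉` vertices pick one, `A`, spanning the most edges. If every vertex of `A`
has at least `(d+1)/2` neighbours in `A` we are done. Otherwise some `x ∈ A` has at most `(d-1)/2`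
neighbours in `A`, and we take `{x} ∪ Aᶜ`, of size `⌊n/2⌋ + 1`. The vertex `x` has at least
`(d+1)/2` neighbours in `Aᶜ`. For `u ∉ A`, maximality of `A` against the swap `A - x + u` shows
that `u` has at most as many neighbours in `A - x` as `x` has in `A`, so `u` also has at least
`(d+1)/2` neighbours in `{x} ∪ Aᶜ`.
-/

open Finset

namespace SimpleGraph

variable {V : Type*} (G : SimpleGraph V) [DecidableRel G.Adj]

/-- Twice the number of edges of `G` inside `S`. -/
noncomputable def sumDegIn (S : Finset V) : ℕ := ∑ u ∈ S, degIn G S u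

lemma exists_card_eq_forall_sumDegIn_le [Fintype V] {k : ℕ} (hk : k ≤ Fintype.card V) :
    ∃ A : Finset V, A.card = k ∧ ∀ B : Finset V, B.card = k → G.sumDegIn B ≤ G.sumDegIn A := by
  obtain ⟨A, hA, hAmax⟩ := exists_max_image (powersetCard k (univ : Finset V)) G.sumDegIn
    (powersetCard_nonempty.mpr (by rwa [card_univ]))
  exact ⟨A, (mem_powersetCard.mp hA).2,
    fun B hB => hAmax B (mem_powersetCard.mpr ⟨subset_univ B, hB⟩)⟩

lemma sum_adj_eq_degIn (S : Finset V) (y : V) :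
    (∑ u ∈ S, if G.Adj u y then 1 else 0) = degIn G S y := by
  rw [degIn, sum_boole, Nat.cast_id]
  congr 1
  exact filter_congr fun u _ => G.adj_comm u y

variable [DecidableEq V]

lemma degIn_insert {S : Finset V} {y : V} (hy : y ∉ S) (u : V) :
    degIn G (insert y S) u = degIn G S u + if G.Adj u y then 1 else 0 := by
  unfold degIn
  rw [filter_insert]
  split
  · rw [card_insert_of_notMem fun h => hy (mem_filter.mp h).1]
  · simp

lemma sumDegIn_insert {S : Finset V} {y : V} (hy : y ∉ S) :
    sumDegIn G (insert y S) = sumDegIn G S + 2 * degIn G S y := by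
  have hself : degIn G (insert y S) y = degIn G S y := by simp [G.degIn_insert hy]
  rw [sumDegIn, sumDegIn, sum_insert hy, hself, sum_congr rfl fun u _ => G.degIn_insert hy u,
    sum_add_distrib, sum_adj_eq_degIn]
  ring

lemma degIn_add_degIn_compl [Fintype V] (S : Finset V) (x : V) :
    degIn G S x + degIn G Sᶜ x = G.degree x := by
  rw [degIn, degIn, ← card_union_of_disjoint (disjoint_filter_filter disjoint_compl_right),
    ← filter_union, union_compl, ← card_neighborFinset_eq_degree, neighborFinset_eq_filter]

variable {G}

lemma degIn_erase_le_of_maximal {A : Finset V}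
    (hmax : ∀ B : Finset V, B.card = A.card → sumDegIn G B ≤ sumDegIn G A)
    {x u : V} (hx : x ∈ A) (hu : u ∉ A) :
    degIn G (A.erase x) u ≤ degIn G A x := by
  have hxA : A = insert x (A.erase x) := (insert_erase hx).symm
  have huA : u ∉ A.erase x := fun h => hu (mem_of_mem_erase h)
  have hswap := hmax (insert u (A.erase x)) (by
    rw [card_insert_of_notMem huA, card_erase_add_one hx])
  have hsum_A : sumDegIn G A = sumDegIn G (A.erase x) + 2 * degIn G (A.erase x) x := by
    conv_lhs => rw [hxA]
    exact sumDegIn_insert G (notMem_erase x A)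
  have hdeg_x : degIn G A x = degIn G (A.erase x) x := by
    conv_lhs => rw [hxA]
    simp [G.degIn_insert (notMem_erase x A)]
  rw [sumDegIn_insert G huA] at hswap
  omega

lemma degree_sub_degIn_le_degIn_insert_compl [Fintype V] {A : Finset V}
    (hmax : ∀ B : Finset V, B.card = A.card → sumDegIn G B ≤ sumDegIn G A)
    {x u : V} (hx : x ∈ A) (hu : u ∈ insert x Aᶜ) :
    G.degree u - degIn G A x ≤ degIn G (insert x Aᶜ) u := by
  have hxc : x ∉ Aᶜ := by simpa using hx
  have hsplit := G.degIn_add_degIn_compl A u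
  rw [G.degIn_insert hxc]
  rcases mem_insert.mp hu with rfl | huc
  · rw [if_neg G.irrefl]
    omega
  · have huA : u ∉ A := mem_compl.mp huc
    have hA_u : degIn G A u = degIn G (A.erase x) u + if G.Adj u x then 1 else 0 := by
      conv_lhs => rw [← insert_erase hx]
      exact G.degIn_insert (notMem_erase x A) u
    have := degIn_erase_le_of_maximal hmax hx huA
    omega

end SimpleGraph

open SimpleGraph in
/-- Every d-regular graph with d odd has a ⌈d/2⌉-cohesive set of at most n/2 + 1 vertices. -/
theorem cohesive_set_odd {V : Type*} [Fintype V] [DecidableEq V] [Nonempty V]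
    (G : SimpleGraph V) [DecidableRel G.Adj] (d : ℕ) (hreg : G.IsRegularOfDegree d) (hd : Odd d) :
    ∃ S : Finset V, S.Nonempty ∧ S.card ≤ Fintype.card V / 2 + 1 ∧
      ∀ x ∈ S, (d + 1) / 2 ≤ degIn G S x := by
  obtain ⟨c, rfl⟩ := hd
  have hn : 0 < Fintype.card V := Fintype.card_pos
  obtain ⟨A, hAcard, hAmax⟩ :=
    exists_card_eq_forall_sumDegIn_le (G := G) (k := Fintype.card V - Fintype.card V / 2) (by omega)
  by_cases hcohesive : ∀ x ∈ A, c + 1 ≤ degIn G A x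
  · refine ⟨A, card_pos.mp (by omega), by omega, fun x hx => ?_⟩
    have := hcohesive x hx
    omega
  · push Not at hcohesive
    obtain ⟨x, hx, hdx⟩ := hcohesive
    refine ⟨insert x Aᶜ, insert_nonempty _ _, ?_, fun u hu => ?_⟩
    · rw [card_insert_of_notMem (by simpa using hx), card_compl]
      omega
    · have := degree_sub_degIn_le_degIn_insert_compl (hAcard ▸ hAmax) hx hu
      rw [hreg u] at this
      omega
end
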